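/- For $n = 3$ and $\eta = \tan(\pi/4 + \epsilon)$ with $\epsilon \in (0, \pi/8)$, the integral $\int_0^{\pi/4-\epsilon} \frac{\cos\alpha - \eta\sin\alpha}{(\pi/4 - \alpha)^{2}}\,d\alpha$ tends to $+\infty$ as $\epsilon \to 0^+$; more precisely it is bounded below by $-\frac{1}{\pi/4-\epsilon}\log\frac{\epsilon}{\pi/4} + O(1)$. -/

import Mathlib

/-!
Put `b = π/4 - ε`. Since `tan (π/4 + ε) = cot b`, the numerator is `sin (b - α) / sin b`, which
by concavity of `sin` dominates the chord `1 - α/b` on `[0, b]`. Against the weight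
`(π/4 - α)⁻²` the chord integrates explicitly to `(-log (ε/(π/4)) - 1 + ε/(π/4)) / b`, and
`1/b ≤ 8/π` absorbs the constant.
-/

open scoped Real Topology
open Filter intervalIntegral Real Set

lemma div_mul_sin_le_sin {x b : ℝ} (hb : 0 < b) (hbπ : b ≤ π) (hx : 0 ≤ x) (hxb : x ≤ b) :
    x / b * sin b ≤ sin x := by
  have h := strictConcaveOn_sin_Icc.concaveOn.2 (mem_Icc.2 ⟨le_rfl, pi_pos.le⟩)
    (mem_Icc.2 ⟨hb.le, hbπ⟩) (sub_nonneg.2 (div_le_one_of_le₀ hxb hb.le))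
    (div_nonneg hx hb.le) (sub_add_cancel 1 (x / b))
  simpa [div_mul_cancel₀, hb.ne'] using h

lemma cos_sub_tan_mul_sin {α θ : ℝ} (hθ : cos θ ≠ 0) :
    cos α - tan θ * sin α = cos (α + θ) / cos θ := by
  rw [tan_eq_sin_div_cos, cos_add]
  field_simp

lemma one_sub_div_le_cos_sub_tan_mul_sin {α b : ℝ} (hb : 0 < b) (hbπ : b < π) (hα : 0 ≤ α)
    (hαb : α ≤ b) : 1 - α / b ≤ cos α - tan (π / 2 - b) * sin α := by
  have hsin : 0 < sin b := sin_pos_of_pos_of_lt_pi hb hbπ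
  rw [cos_sub_tan_mul_sin (by rw [cos_pi_div_two_sub]; exact hsin.ne'), cos_pi_div_two_sub,
    show α + (π / 2 - b) = π / 2 - (b - α) by ring, cos_pi_div_two_sub, le_div_iff₀ hsin]
  have h := div_mul_sin_le_sin hb hbπ.le (sub_nonneg.2 hαb) (sub_le_self b hα)
  rwa [sub_div, div_self hb.ne'] at h

lemma intervalIntegrable_div_sub_sq {f : ℝ → ℝ} {a b c : ℝ} (hf : Continuous f) (hab : a ≤ b)
    (hbc : b < c) : IntervalIntegrable (fun α => f α / (c - α) ^ 2) MeasureTheory.volume a b := by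
  refine ContinuousOn.intervalIntegrable (ContinuousOn.div hf.continuousOn (by fun_prop) ?_)
  intro α hα
  rw [uIcc_of_le hab] at hα
  exact (pow_pos (by linarith [hα.2]) 2).ne'

lemma integral_one_sub_div_div_sq {b c : ℝ} (hb : 0 < b) (hbc : b < c) :
    ∫ α in (0 : ℝ)..b, (1 - α / b) / (c - α) ^ 2 = (-log ((c - b) / c) - 1 + (c - b) / c) / b := by
  have hpos : ∀ α ∈ uIcc 0 b, 0 < c - α := fun α hα => by
    rw [uIcc_of_le hb.le] at hα; linarith [hα.2]
  -- the antiderivative comes from `(1 - α/b)/(c - α)² = (1/(c - α) - (c - b)/(c - α)²)/b`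
  have hderiv : ∀ α ∈ uIcc 0 b, HasDerivAt (fun α => (-log (c - α) - (c - b) / (c - α)) / b)
      ((1 - α / b) / (c - α) ^ 2) α := by
    intro α hα
    have hne := (hpos α hα).ne'
    have hb0 := hb.ne'
    have hlin : HasDerivAt (fun α : ℝ => c - α) (-1) α := by
      simpa using (hasDerivAt_id α).const_sub c
    refine (((hlin.log hne).neg.sub ((hasDerivAt_const α (c - b)).div hlin hne)).div_const b
      ).congr_deriv ?_
    field_simp
    ring
  rw [integral_eq_sub_of_hasDerivAt hderiv
      (intervalIntegrable_div_sub_sq (by fun_prop) hb.le hbc), log_div (by linarith) (by linarith),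
    div_self (by linarith : c - b ≠ 0)]
  simp only [sub_zero]
  ring

lemma neg_log_sub_le_integral {ε : ℝ} (hε : ε ∈ Ioo 0 (π / 8)) :
    -(1 / (π / 4 - ε)) * log (ε / (π / 4)) - 8 / π ≤
      ∫ α in (0 : ℝ)..(π / 4 - ε),
        (cos α - tan (π / 4 + ε) * sin α) / (π / 4 - α) ^ 2 := by
  obtain ⟨hε0, hε8⟩ := hε
  have hπ := pi_pos
  have hb : 0 < π / 4 - ε := by linarith
  have htan : tan (π / 4 + ε) = tan (π / 2 - (π / 4 - ε)) := by ring_nf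
  have hbc : π / 4 - ε < π / 4 := by linarith
  have hmono := integral_mono_on hb.le
    (intervalIntegrable_div_sub_sq (f := fun α => 1 - α / (π / 4 - ε)) (by fun_prop) hb.le hbc)
    (intervalIntegrable_div_sub_sq (f := fun α => cos α - tan (π / 4 + ε) * sin α) (by fun_prop)
      hb.le hbc) fun α hα => by
      rw [htan]
      exact div_le_div_of_nonneg_right
        (one_sub_div_le_cos_sub_tan_mul_sin hb (by linarith) hα.1 hα.2) (sq_nonneg _)
  rw [integral_one_sub_div_div_sq hb hbc, sub_sub_cancel] at hmono
  have hinv : 1 / (π / 4 - ε) ≤ 8 / π := by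
    rw [div_le_div_iff₀ hb hπ]; linarith
  have hεterm : 0 ≤ ε / (π / 4) / (π / 4 - ε) := by positivity
  calc -(1 / (π / 4 - ε)) * log (ε / (π / 4)) - 8 / π
      ≤ -(1 / (π / 4 - ε)) * log (ε / (π / 4)) - 1 / (π / 4 - ε) + ε / (π / 4) / (π / 4 - ε) := by
        linarith
    _ = (-log (ε / (π / 4)) - 1 + ε / (π / 4)) / (π / 4 - ε) := by ring
    _ ≤ _ := hmono

lemma tendsto_neg_one_div_sub_mul_log_div {c : ℝ} (hc : 0 < c) :
    Tendsto (fun ε => -(1 / (c - ε)) * log (ε / c)) (𝓝[>] 0) atTop := by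
  have hinv : Tendsto (fun ε : ℝ => 1 / (c - ε)) (𝓝[>] 0) (𝓝 (1 / c)) := by
    have : ContinuousAt (fun ε : ℝ => 1 / (c - ε)) 0 :=
      continuousAt_const.div (continuousAt_const.sub continuousAt_id) (by simpa using hc.ne')
    simpa using this.tendsto.mono_left nhdsWithin_le_nhds
  have hdiv : Tendsto (fun ε : ℝ => ε / c) (𝓝[>] 0) (𝓝[>] 0) :=
    tendsto_nhdsWithin_of_tendsto_nhds_of_eventually_within _
      (by simpa using ((continuous_id.div_const c).tendsto 0).mono_left nhdsWithin_le_nhds)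
      (by filter_upwards [self_mem_nhdsWithin] with ε hε using div_pos hε hc)
  have hlog := tendsto_neg_atBot_atTop.comp (tendsto_log_nhdsGT_zero.comp hdiv)
  simpa [neg_mul, mul_neg] using (hinv.pos_mul_atTop (by positivity) hlog)

/-- For `n = 3` and `η = tan(π/4+ε)` with `ε ∈ (0, π/8)`, the integral
`∫₀^{π/4-ε} (cos α - η sin α)/(π/4-α)² dα` tends to `+∞` as `ε → 0⁺`, and is
bounded below by `-(1/(π/4-ε)) log(ε/(π/4)) + O(1)`. -/
theorem stmt17 :
    Tendsto (fun ε : ℝ =>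
        ∫ α in (0 : ℝ)..(π / 4 - ε),
          (Real.cos α - Real.tan (π / 4 + ε) * Real.sin α) / (π / 4 - α) ^ 2)
      (𝓝[Set.Ioo 0 (π / 8)] 0) atTop ∧
    ∃ C : ℝ, ∀ ε ∈ Set.Ioo (0 : ℝ) (π / 8),
      (∫ α in (0 : ℝ)..(π / 4 - ε),
          (Real.cos α - Real.tan (π / 4 + ε) * Real.sin α) / (π / 4 - α) ^ 2)
        ≥ -(1 / (π / 4 - ε)) * Real.log (ε / (π / 4)) - C := by
  refine ⟨?_, 8 / π, fun ε hε => neg_log_sub_le_integral hε⟩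
  have hbound := tendsto_atTop_add_const_right _ (-(8 / π))
    ((tendsto_neg_one_div_sub_mul_log_div (by positivity : (0 : ℝ) < π / 4)).mono_left
      (nhdsWithin_mono _ (Ioo_subset_Ioi_self : Ioo 0 (π / 8) ⊆ Ioi 0)))
  refine tendsto_atTop_mono' _ ?_ hbound
  filter_upwards [self_mem_nhdsWithin] with ε hε
  simpa only [← sub_eq_add_neg] using neg_log_sub_le_integral hε
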